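/- arXiv:1612.06307 — 2 statements merged into one kernel-verified Lean document; each statement's English description precedes it below -/
import Mathlib

section
/- There exists a constant C > 0 (depending only on m) such that for every z ∈ ℂ, ∫₀¹ |z|·(1 + ψ_m'(t|z|))·exp(ψ_m(t|z|)) dt ≤ C·exp(ψ_m(z)), where ψ_m(r) = r²/2 − m·log(1+r) for r ≥ 0 and ψ_m' denotes its derivative. -/
open MeasureTheory

/-- ψ_m as a function of the radius: ψ_m(r) = r²/2 − m·log(1+r). -/
noncomputable def psiR (m : ℕ) (r : ℝ) : ℝ := r ^ 2 / 2 - m * Real.log (1 + r)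

/-- ψ_m'(r) = r − m/(1+r). -/
noncomputable def psiR' (m : ℕ) (r : ℝ) : ℝ := r - m / (1 + r)


/-!
Substituting `s = t|z|` turns the integral into `∫₀^{|z|} (1 + ψ') e^ψ`. Split the integrand as
`(1 - ψ') e^ψ + 2 ψ' e^ψ`: the second part integrates to `2 (e^{ψ(|z|)} - 1)`, and the first is
nonpositive beyond `m + 1` (where `ψ' ≥ 1`), so its integral is bounded by a constant depending
only on `m`. Finally `ψ ≥ -m²/2` turns that constant into a multiple of `e^{ψ(|z|)}`.
-/

open Set intervalIntegral

lemma intervalIntegral_unit_mul_comp_mul (f : ℝ → ℝ) (c : ℝ) :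
    ∫ t in (0 : ℝ)..1, c * f (t * c) = ∫ s in 0..c, f s := by
  rw [intervalIntegral.integral_const_mul, ← smul_eq_mul, smul_integral_comp_mul_right,
    zero_mul, one_mul]

lemma intervalIntegral_le_mul_of_le_of_nonpos {f : ℝ → ℝ} {a B r : ℝ}
    (ha : 0 ≤ a) (hr : 0 ≤ r) (hB : 0 ≤ B) (hf : ContinuousOn f (Ici 0))
    (hle : ∀ s ∈ Icc 0 a, f s ≤ B) (hnonpos : ∀ s, a ≤ s → f s ≤ 0) :
    ∫ s in 0..r, f s ≤ a * B := by
  have hint : ∀ {x y}, 0 ≤ x → 0 ≤ y → IntervalIntegrable f volume x y := fun hx hy =>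
    (hf.mono fun s hs => le_trans (le_min hx hy) hs.1).intervalIntegrable
  have initial : ∀ b ∈ Icc 0 a, ∫ s in 0..b, f s ≤ a * B := fun b hb => calc
    ∫ s in 0..b, f s ≤ ∫ _ in 0..b, B :=
      integral_mono_on hb.1 (hint le_rfl hb.1) intervalIntegrable_const
        fun s hs => hle s ⟨hs.1, hs.2.trans hb.2⟩
    _ = b * B := by simp
    _ ≤ a * B := mul_le_mul_of_nonneg_right hb.2 hB
  rcases le_total r a with hra | har
  · exact initial r ⟨hr, hra⟩
  · have tail : ∫ s in a..r, f s ≤ 0 := by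
      have := integral_nonneg har (f := fun s => -f s) (μ := volume)
        fun s hs => neg_nonneg.2 (hnonpos s hs.1)
      rwa [intervalIntegral.integral_neg, neg_nonneg] at this
    rw [← integral_add_adjacent_intervals (hint le_rfl ha) (hint ha hr)]
    linarith [initial a ⟨ha, le_rfl⟩]

section psiR

variable (m : ℕ)

lemma psiR_zero : psiR m 0 = 0 := by
  unfold psiR
  simp

lemma hasDerivAt_psiR {s : ℝ} (hs : 1 + s ≠ 0) : HasDerivAt (psiR m) (psiR' m s) s := by
  have hsq : HasDerivAt (fun x : ℝ => x ^ 2 / 2) s s := by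
    simpa using (hasDerivAt_pow 2 s).div_const 2
  have hlog : HasDerivAt (fun x : ℝ => Real.log (1 + x)) (1 + s)⁻¹ s := by
    simpa using ((hasDerivAt_id s).const_add 1).log hs
  have h := hsq.sub (hlog.const_mul (m : ℝ))
  rw [← div_eq_mul_inv] at h
  exact h

lemma hasDerivAt_exp_psiR {s : ℝ} (hs : 1 + s ≠ 0) :
    HasDerivAt (fun x => Real.exp (psiR m x)) (psiR' m s * Real.exp (psiR m s)) s := by
  simpa [mul_comm] using (hasDerivAt_psiR m hs).exp

lemma continuousOn_psiR' : ContinuousOn (psiR' m) (Ici 0) :=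
  continuousOn_id.sub <|
    continuousOn_const.div (by fun_prop) fun s (hs : 0 ≤ s) => by positivity

lemma continuousOn_exp_psiR : ContinuousOn (fun x => Real.exp (psiR m x)) (Ici 0) :=
  fun s (hs : 0 ≤ s) => (hasDerivAt_exp_psiR m (by positivity)).continuousAt.continuousWithinAt

lemma neg_sq_div_two_le_psiR {x : ℝ} (hx : -1 < x) : -((m : ℝ) ^ 2 / 2) ≤ psiR m x := by
  have hlog : Real.log (1 + x) ≤ x := by
    linarith [Real.log_le_sub_one_of_pos (x := 1 + x) (by linarith)]
  have := mul_le_mul_of_nonneg_left hlog (Nat.cast_nonneg (α := ℝ) m)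
  unfold psiR
  nlinarith [sq_nonneg (x - m)]

lemma psiR_le_sq_div_two {x : ℝ} (hx : 0 ≤ x) : psiR m x ≤ x ^ 2 / 2 := by
  have := mul_nonneg (Nat.cast_nonneg (α := ℝ) m) (Real.log_nonneg (by linarith : 1 ≤ 1 + x))
  unfold psiR
  linarith

lemma sub_le_psiR' {x : ℝ} (hx : 0 ≤ x) : x - m ≤ psiR' m x := by
  have : (m : ℝ) / (1 + x) ≤ m := div_le_self (Nat.cast_nonneg m) (by linarith)
  unfold psiR'
  linarith

lemma one_sub_psiR'_mul_exp_le {x : ℝ} (hx : x ∈ Icc 0 ((m : ℝ) + 1)) :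
    (1 - psiR' m x) * Real.exp (psiR m x) ≤
      ((m : ℝ) + 1) * Real.exp (((m : ℝ) + 1) ^ 2 / 2) := by
  have hexp : Real.exp (psiR m x) ≤ Real.exp (((m : ℝ) + 1) ^ 2 / 2) := by
    gcongr
    refine (psiR_le_sq_div_two m hx.1).trans ?_
    gcongr
    exacts [hx.1, hx.2]
  calc (1 - psiR' m x) * Real.exp (psiR m x) ≤ ((m : ℝ) + 1) * Real.exp (psiR m x) := by
        gcongr
        linarith [sub_le_psiR' m hx.1, hx.1]
    _ ≤ _ := by gcongr

lemma integral_one_add_psiR'_mul_exp_le {r : ℝ} (hr : 0 ≤ r) :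
    ∫ s in 0..r, (1 + psiR' m s) * Real.exp (psiR m s) ≤
      ((m : ℝ) + 1) ^ 2 * Real.exp (((m : ℝ) + 1) ^ 2 / 2) + 2 * Real.exp (psiR m r) := by
  have hsub : uIcc 0 r ⊆ Ici 0 := by
    rw [uIcc_of_le hr]
    exact Icc_subset_Ici_self
  have hexp := (continuousOn_exp_psiR m).mono hsub
  have hderiv := ((continuousOn_psiR' m).mono hsub).mul hexp
  have ftc : ∫ s in 0..r, psiR' m s * Real.exp (psiR m s) = Real.exp (psiR m r) - 1 := by
    rw [integral_eq_sub_of_hasDerivAt (fun s hs => hasDerivAt_exp_psiR m ?_)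
      hderiv.intervalIntegrable, psiR_zero, Real.exp_zero]
    have : 0 ≤ s := hsub hs
    positivity
  have hcorrection : ∫ s in 0..r, (1 - psiR' m s) * Real.exp (psiR m s) ≤
      ((m : ℝ) + 1) ^ 2 * Real.exp (((m : ℝ) + 1) ^ 2 / 2) := by
    refine (intervalIntegral_le_mul_of_le_of_nonpos
      (f := fun s => (1 - psiR' m s) * Real.exp (psiR m s)) (by positivity) hr (by positivity)
      ((continuousOn_const.sub (continuousOn_psiR' m)).mul (continuousOn_exp_psiR m))
      (fun s hs => one_sub_psiR'_mul_exp_le m hs) fun s hs => ?_).trans_eq (by ring)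
    have := sub_le_psiR' m (by linarith [(Nat.cast_nonneg m : (0 : ℝ) ≤ m)] : (0 : ℝ) ≤ s)
    exact mul_nonpos_of_nonpos_of_nonneg (by linarith) (Real.exp_pos _).le
  have hsplit : ∫ s in 0..r, (1 + psiR' m s) * Real.exp (psiR m s) =
      ∫ s in 0..r, ((1 - psiR' m s) * Real.exp (psiR m s) +
        2 * (psiR' m s * Real.exp (psiR m s))) := by
    congr 1; ext s; ring
  rw [hsplit, intervalIntegral.integral_add, intervalIntegral.integral_const_mul, ftc]
  · linarith
  · exact ((continuousOn_const.sub ((continuousOn_psiR' m).mono hsub)).mul hexp).intervalIntegrable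
  · exact (continuousOn_const.mul hderiv).intervalIntegrable

end psiR

/-- ∃ C > 0 (depending only on m) such that for every z ∈ ℂ,
∫₀¹ |z|·(1 + ψ_m'(t|z|))·exp(ψ_m(t|z|)) dt ≤ C·exp(ψ_m(|z|)). -/
theorem stmt_1 (m : ℕ) :
    ∃ C > (0 : ℝ), ∀ z : ℂ,
      (∫ t in (0:ℝ)..1,
          ‖z‖ * (1 + psiR' m (t * ‖z‖)) *
            Real.exp (psiR m (t * ‖z‖)))
        ≤ C * Real.exp (psiR m (‖z‖)) := by
  set A : ℝ := ((m : ℝ) + 1) ^ 2 * Real.exp (((m : ℝ) + 1) ^ 2 / 2)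
  refine ⟨A * Real.exp ((m : ℝ) ^ 2 / 2) + 2, by positivity, fun z => ?_⟩
  have hA : A ≤ A * Real.exp ((m : ℝ) ^ 2 / 2) * Real.exp (psiR m ‖z‖) := by
    rw [mul_assoc, ← Real.exp_add]
    refine le_mul_of_one_le_right (by positivity) (Real.one_le_exp ?_)
    linarith [neg_sq_div_two_le_psiR m (by linarith [norm_nonneg z] : (-1 : ℝ) < ‖z‖)]
  simp_rw [mul_assoc ‖z‖]
  rw [intervalIntegral_unit_mul_comp_mul (fun s => (1 + psiR' m s) * Real.exp (psiR m s))]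
  linarith [integral_one_add_psiR'_mul_exp_le m (norm_nonneg z)]
end

section
/- Let g be an entire function and 0 < p < ∞ such that ∫_ℂ |g'(z)|^p·(1 + ψ_m'(|z|))^{−p} dA(z) < ∞. If p > 2 then g' is constant, and if 0 < p ≤ 2 then g' ≡ 0 (g is constant). -/
open MeasureTheory

/-- ψ_m'(r) = r − m/(1+r). -/
noncomputable def psi' (m : ℕ) (r : ℝ) : ℝ := r - m / (1 + r)

open Metric Set Filter Real Topology

/-!
For `p > 0` and entire `f`, `‖f‖ ^ p` is subharmonic: Jensen's formula bounds `log ‖f c‖` by the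
circle average of `log ‖f‖`, and convexity of `exp` turns this into
`‖f c‖ ^ p ≤ circleAverage (‖f‖ ^ p) c r`; integrating over the radii gives
`π s² ‖f c‖ ^ p ≤ ∫_{B(c, s)} ‖f‖ ^ p`. On the disc `B(a, |a|/2)` the weight `1 + ψ_m'(|z|)` is at
most `2|a|`, so the integrability hypothesis yields `|g'(a)| = O(|a| ^ (1 - 2/p))`. As
`1 - 2/p < 1`, Cauchy's estimate forces `g'' = 0`, so `g'` is a constant `c`; for `p ≤ 2` the
weight `(1 + |z|) ^ (-p)` is not integrable on `ℂ`, hence `c = 0`.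
-/

theorem exp_circleAverage_le {u : ℂ → ℝ} {c : ℂ} {r : ℝ} (hu : CircleIntegrable u c r)
    (hexp : CircleIntegrable (fun z ↦ exp (u z)) c r) :
    exp (circleAverage u c r) ≤ circleAverage (fun z ↦ exp (u z)) c r := by
  set t := circleAverage u c r
  have hsub : CircleIntegrable (fun z ↦ u z - t) c r := hu.sub (circleIntegrable_const t c r)
  have htangent : ∀ z, exp t * (1 + (u z - t)) ≤ exp (u z) := fun z ↦ by
    calc exp t * (1 + (u z - t)) ≤ exp t * exp (u z - t) := by
          gcongr; linarith [add_one_le_exp (u z - t)]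
      _ = exp (u z) := by rw [← exp_add, add_sub_cancel]
  calc exp t = circleAverage (fun z ↦ exp t * (1 + (u z - t))) c r := by
        simp only [← smul_eq_mul (a := exp t), circleAverage_fun_smul]
        rw [circleAverage_fun_add (circleIntegrable_const 1 c r) hsub,
          circleAverage_fun_sub hu (circleIntegrable_const t c r), circleAverage_const,
          circleAverage_const, sub_self, add_zero, smul_eq_mul, mul_one]
    _ ≤ circleAverage (fun z ↦ exp (u z)) c r :=
        circleAverage_mono (((circleIntegrable_const 1 c r).add hsub).const_fun_smul) hexp
          fun z _ ↦ htangent z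

theorem AnalyticOnNhd.log_norm_le_circleAverage {f : ℂ → ℂ} {c : ℂ} {r : ℝ} (hr : 0 < r)
    (hf : AnalyticOnNhd ℂ f (closedBall c r)) (hc : f c ≠ 0) :
    Real.log ‖f c‖ ≤ circleAverage (fun z ↦ Real.log ‖f z‖) c r := by
  rw [← abs_of_pos hr] at hf
  rw [hf.circleAverage_log_norm hr.ne' hc]
  refine le_add_of_nonneg_left (finsum_nonneg fun u ↦ ?_)
  by_cases hu : u ∈ closedBall c |r|
  · rcases eq_or_ne u c with rfl | huc
    · simp
    · refine mul_nonneg (mod_cast MeromorphicOn.AnalyticOnNhd.divisor_nonneg hf u) (log_nonneg ?_)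
      have : 0 < ‖c - u‖ := norm_pos_iff.2 (sub_ne_zero.2 huc.symm)
      rw [mem_closedBall, dist_eq_norm', abs_of_pos hr] at hu
      rw [← div_eq_mul_inv, one_le_div this]
      exact hu
  · simp [Function.locallyFinsuppWithin.apply_eq_zero_of_notMem _ hu]

theorem AnalyticOnNhd.norm_rpow_le_circleAverage {f : ℂ → ℂ} {c : ℂ} {r p : ℝ}
    (hr : 0 < r) (hp : 0 < p) (hf : AnalyticOnNhd ℂ f (closedBall c r)) :
    ‖f c‖ ^ p ≤ circleAverage (fun z ↦ ‖f z‖ ^ p) c r := by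
  rcases eq_or_ne (f c) 0 with hc | hc
  · rw [hc, norm_zero, zero_rpow hp.ne']
    exact circleAverage_nonneg_of_nonneg fun z _ ↦ by positivity
  have hsphere : sphere c |r| ⊆ closedBall c r := by
    rw [abs_of_pos hr]; exact sphere_subset_closedBall
  have hlog : CircleIntegrable (fun z ↦ Real.log ‖f z‖) c r :=
    (hf.mono hsphere).meromorphicOn.circleIntegrable_log_norm
  have hexp : (fun z ↦ Real.exp (p * Real.log ‖f z‖)) =ᶠ[codiscreteWithin (sphere c |r|)]
      fun z ↦ ‖f z‖ ^ p := by
    refine codiscreteWithin_mono hsphere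
      (Filter.mem_of_superset (hf.preimage_zero_mem_codiscreteWithin hc
        (mem_closedBall_self hr.le) (isConnected_closedBall hr.le)) fun z hz ↦ ?_)
    simp only [mem_ofPred_eq, rpow_def_of_pos (norm_pos_iff.2 hz), mul_comm]
  have hrpow : CircleIntegrable (fun z ↦ ‖f z‖ ^ p) c r :=
    ((hf.continuousOn.norm.rpow_const fun _ _ ↦ Or.inr hp.le).mono hsphere).circleIntegrable'
  calc ‖f c‖ ^ p = Real.exp (p * Real.log ‖f c‖) := by
        rw [rpow_def_of_pos (norm_pos_iff.2 hc), mul_comm]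
    _ ≤ Real.exp (circleAverage (fun z ↦ p * Real.log ‖f z‖) c r) := by
        simp only [← smul_eq_mul (a := p), circleAverage_fun_smul]
        gcongr
        exact hf.log_norm_le_circleAverage hr hc
    _ ≤ circleAverage (fun z ↦ Real.exp (p * Real.log ‖f z‖)) c r :=
        exp_circleAverage_le hlog.const_fun_smul (hrpow.congr_codiscreteWithin hexp.symm)
    _ = circleAverage (fun z ↦ ‖f z‖ ^ p) c r :=
        circleAverage_congr_codiscreteWithin hexp hr.ne'

theorem setIntegral_ball_zero_eq_integral_circleAverage {E : Type*} [NormedAddCommGroup E]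
    [NormedSpace ℝ E] [CompleteSpace E] {φ : ℂ → E} (hφ : Continuous φ) {s : ℝ}
    (hs : 0 ≤ s) :
    ∫ z in ball 0 s, φ z = ∫ r in 0..s, (2 * π * r) • circleAverage φ 0 r := by
  set S : Set (ℝ × ℝ) := Ioo 0 s ×ˢ Ioo (-π) π
  have hpolar : ∫ z in ball 0 s, φ z = ∫ q in S, q.1 • φ (circleMap 0 q.1 q.2) := by
    rw [← integral_indicator measurableSet_ball, ← Complex.integral_comp_polarCoord_symm]
    have hsymm : ∀ q : ℝ × ℝ, Complex.polarCoord.symm q = circleMap 0 q.1 q.2 := fun q ↦ by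
      simp [circleMap, Complex.exp_mul_I]
    have hS : polarCoord.target ∩ S = S := inter_eq_right.2 (prod_mono (fun r hr ↦ hr.1) le_rfl)
    rw [← hS, ← setIntegral_indicator (measurableSet_Ioo.prod measurableSet_Ioo)]
    refine setIntegral_congr_fun polarCoord.open_target.measurableSet fun q hq ↦ ?_
    have hq1 : 0 < q.1 := hq.1
    by_cases hqs : q.1 < s
    · rw [indicator_of_mem (show q ∈ S from ⟨⟨hq1, hqs⟩, hq.2⟩), indicator_of_mem, hsymm]
      rw [mem_ball_zero_iff, Complex.norm_polarCoord_symm, abs_of_pos hq1]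
      exact hqs
    · rw [indicator_of_notMem (show q ∉ S from fun h ↦ hqs h.1.2), indicator_of_notMem,
        smul_zero]
      rw [mem_ball_zero_iff, Complex.norm_polarCoord_symm, abs_of_pos hq1]
      exact hqs
  have hinner : ∀ r,
      ∫ θ in Ioo (-π) π, φ (circleMap 0 r θ) = (2 * π) • circleAverage φ 0 r := by
    intro r
    rw [circleAverage_eq_integral_add (-π), smul_inv_smul₀ (by positivity),
      intervalIntegral.integral_comp_add_right (fun θ ↦ φ (circleMap 0 r θ)),
      intervalIntegral.integral_of_le (by linarith [pi_pos]), integral_Ioc_eq_integral_Ioo]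
    ring_nf
  have hint : IntegrableOn (fun q : ℝ × ℝ ↦ q.1 • φ (circleMap 0 q.1 q.2)) S := by
    refine (ContinuousOn.integrableOn_compact (isCompact_Icc.prod isCompact_Icc) ?_).mono_set
      (prod_mono Ioo_subset_Icc_self Ioo_subset_Icc_self)
    fun_prop
  rw [hpolar, Measure.volume_eq_prod, setIntegral_prod _ (by rwa [← Measure.volume_eq_prod]),
    intervalIntegral.integral_of_le hs, integral_Ioc_eq_integral_Ioo]
  refine setIntegral_congr_fun measurableSet_Ioo fun r _ ↦ ?_
  simp only [integral_smul, hinner, smul_smul, mul_comm r]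

theorem setIntegral_ball_eq_integral_circleAverage {E : Type*} [NormedAddCommGroup E]
    [NormedSpace ℝ E] [CompleteSpace E] {φ : ℂ → E} (hφ : Continuous φ) (c : ℂ) {s : ℝ}
    (hs : 0 ≤ s) :
    ∫ z in ball c s, φ z = ∫ r in 0..s, (2 * π * r) • circleAverage φ c r := by
  have hball : (· + c) ⁻¹' ball c s = ball 0 s := by ext z; simp
  rw [← (measurePreserving_add_right volume c).setIntegral_preimage_emb
    (measurableEmbedding_addRight c) φ (ball c s), hball,
    setIntegral_ball_zero_eq_integral_circleAverage (φ := fun z ↦ φ (z + c)) (by fun_prop) hs]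
  simp only [circleAverage_map_add_const]

theorem Differentiable.pi_mul_sq_mul_norm_rpow_le_setIntegral {f : ℂ → ℂ}
    (hf : Differentiable ℂ f) {p : ℝ} (hp : 0 < p) (c : ℂ) {s : ℝ} (hs : 0 ≤ s) :
    π * s ^ 2 * ‖f c‖ ^ p ≤ ∫ z in ball c s, ‖f z‖ ^ p := by
  have hcont : Continuous fun z ↦ ‖f z‖ ^ p :=
    hf.continuous.norm.rpow_const fun _ ↦ Or.inr hp.le
  rw [setIntegral_ball_eq_integral_circleAverage hcont c hs]
  calc π * s ^ 2 * ‖f c‖ ^ p = ∫ r in 0..s, (2 * π * r) • ‖f c‖ ^ p := by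
        rw [intervalIntegral.integral_smul_const, intervalIntegral.integral_const_mul, integral_id,
          smul_eq_mul]
        ring
    _ ≤ ∫ r in 0..s, (2 * π * r) • circleAverage (fun z ↦ ‖f z‖ ^ p) c r := by
        refine intervalIntegral.integral_mono_on_of_le_Ioo hs
          ((by fun_prop : Continuous _).intervalIntegrable _ _)
          ((by fun_prop : Continuous _).intervalIntegrable _ _)
          fun r hr ↦ ?_
        have hr0 : 0 < r := hr.1
        gcongr
        exact AnalyticOnNhd.norm_rpow_le_circleAverage hr0 hp fun z _ ↦ hf.analyticAt z

theorem Differentiable.apply_eq_apply_of_norm_le_rpow {F : Type*} [NormedAddCommGroup F]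
    [NormedSpace ℂ F] {f : ℂ → F} (hf : Differentiable ℂ f) {B e r₀ : ℝ} (he : e < 1)
    (hbound : ∀ z, r₀ ≤ ‖z‖ → ‖f z‖ ≤ B * ‖z‖ ^ e) (z w : ℂ) : f z = f w := by
  refine is_const_of_deriv_eq_zero hf (fun c ↦ ?_) z w
  set k := max e 0
  have hk : k < 1 := max_lt he one_pos
  -- Cauchy's estimate on `sphere c R`, on which `‖z‖ ≤ 2 * R`
  have hcauchy : ∀ R, |r₀| + ‖c‖ + 1 ≤ R →
      ‖_root_.deriv f c‖ ≤ |B| * 2 ^ k * R ^ (k - 1) := by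
    intro R hR
    have hR0 : 0 < R := by linarith [abs_nonneg r₀, norm_nonneg c]
    have hsphere : ∀ z ∈ sphere c R, ‖f z‖ ≤ |B| * (2 * R) ^ k := by
      intro z hz
      rw [mem_sphere, dist_eq_norm] at hz
      have hlow : max r₀ 1 ≤ ‖z‖ := by
        have := norm_sub_le z c
        exact max_le (by linarith [le_abs_self r₀]) (by linarith [abs_nonneg r₀])
      have hup : ‖z‖ ≤ 2 * R := by
        have := norm_le_norm_add_norm_sub' z c
        linarith [abs_nonneg r₀]
      calc ‖f z‖ ≤ B * ‖z‖ ^ e := hbound z ((le_max_left _ _).trans hlow)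
        _ ≤ |B| * ‖z‖ ^ k := by
            gcongr
            exacts [le_abs_self B, (le_max_right _ _).trans hlow, le_max_left _ _]
        _ ≤ |B| * (2 * R) ^ k := by gcongr
    calc ‖_root_.deriv f c‖ ≤ |B| * (2 * R) ^ k / R :=
          Complex.norm_deriv_le_of_forall_mem_sphere_norm_le hR0 hf.diffContOnCl hsphere
      _ = |B| * 2 ^ k * R ^ (k - 1) := by
          rw [mul_rpow zero_le_two hR0.le, rpow_sub_one hR0.ne']; ring
  have hlim : Tendsto (fun R ↦ |B| * 2 ^ k * R ^ (k - 1)) atTop (𝓝 0) := by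
    simpa [neg_sub] using (tendsto_rpow_neg_atTop (sub_pos.2 hk)).const_mul (|B| * 2 ^ k)
  exact norm_le_zero_iff.1 (ge_of_tendsto hlim (eventually_atTop.2 ⟨_, hcauchy⟩))

theorem rpow_neg_le_one_add_psi'_rpow_neg {m : ℕ} {p t T : ℝ} (hp : 0 ≤ p)
    (hmt : (m : ℝ) ≤ t) (hT : 1 + t ≤ T) : T ^ (-p) ≤ (1 + psi' m t) ^ (-p) := by
  have ht : 0 ≤ t := (Nat.cast_nonneg m).trans hmt
  have hdiv : (m : ℝ) / (1 + t) ≤ m := div_le_self (Nat.cast_nonneg m) (by linarith)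
  have hdiv' : 0 ≤ (m : ℝ) / (1 + t) := by positivity
  unfold psi'
  exact rpow_le_rpow_of_nonpos (by linarith) (by linarith) (neg_nonpos.2 hp)

theorem not_integrable_one_add_psi'_rpow_neg (m : ℕ) {p : ℝ} (hp0 : 0 ≤ p) (hp2 : p ≤ 2) :
    ¬ Integrable (fun z : ℂ ↦ (1 + psi' m ‖z‖) ^ (-p)) := by
  intro hint
  rw [integrable_fun_norm_addHaar volume (f := fun t ↦ (1 + psi' m t) ^ (-p)),
    Complex.finrank_real_complex] at hint
  have hT : (0 : ℝ) < m + 1 := by positivity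
  refine (integrableOn_Ioi_rpow_iff hT).not.2 (lt_irrefl (-1)) ?_
  refine ((hint.mono_set (Ioi_subset_Ioi hT.le)).const_mul 4).mono' (by fun_prop) ?_
  filter_upwards [ae_restrict_mem measurableSet_Ioi] with t (ht : (m : ℝ) + 1 < t)
  have ht1 : 1 ≤ 2 * t := by linarith [(Nat.cast_nonneg m : (0 : ℝ) ≤ m)]
  have ht0 : 0 < t := by linarith
  calc ‖t ^ (-1 : ℝ)‖ = 4 * (t * (2 * t) ^ (-2 : ℝ)) := by
        rw [norm_of_nonneg (by positivity), rpow_neg_one, rpow_neg (by positivity), rpow_two]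
        field_simp
        ring
    _ ≤ 4 * (t * (2 * t) ^ (-p)) := by gcongr
    _ ≤ 4 * (t ^ (2 - 1) • (1 + psi' m t) ^ (-p)) := by
        rw [smul_eq_mul, Nat.add_one_sub_one, pow_one]
        gcongr 4 * (t * ?_)
        exact rpow_neg_le_one_add_psi'_rpow_neg hp0 (by linarith) (by linarith)

theorem Differentiable.exists_norm_le_rpow_of_integrable {f : ℂ → ℂ} (hf : Differentiable ℂ f)
    (m : ℕ) {p : ℝ} (hp : 0 < p)
    (hint : Integrable fun z : ℂ ↦ ‖f z‖ ^ p * (1 + psi' m ‖z‖) ^ (-p)) :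
    ∃ B, ∀ a : ℂ, 2 * m + 2 ≤ ‖a‖ → ‖f a‖ ≤ B * ‖a‖ ^ ((p - 2) / p) := by
  set F := fun z : ℂ ↦ ‖f z‖ ^ p * (1 + psi' m ‖z‖) ^ (-p)
  -- `F` may be negative: `(1 + psi' m ‖z‖) ^ (-p)` is a junk value where `1 + psi' m ‖z‖ < 0`
  set K := ∫ z, ‖F z‖
  set C := 4 * 2 ^ p * K / π
  have hC : 0 ≤ C := by have : 0 ≤ K := integral_nonneg fun _ ↦ norm_nonneg _; positivity
  refine ⟨C ^ p⁻¹, fun a ha ↦ ?_⟩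
  set ρ := ‖a‖
  have hm : (0 : ℝ) ≤ m := Nat.cast_nonneg m
  have hρ : 0 < ρ := by linarith
  have hlocal : ∀ z ∈ ball a (ρ / 2), ‖f z‖ ^ p ≤ (2 * ρ) ^ p * ‖F z‖ := by
    intro z hz
    rw [mem_ball, dist_eq_norm] at hz
    have hlow := norm_sub_norm_le a z
    have hup := norm_le_norm_add_norm_sub' z a
    have hw := rpow_neg_le_one_add_psi'_rpow_neg (m := m) (t := ‖z‖) (T := 2 * ρ) hp.le
      (by rw [norm_sub_rev] at hlow; linarith) (by linarith)
    calc ‖f z‖ ^ p = (2 * ρ) ^ p * (2 * ρ) ^ (-p) * ‖f z‖ ^ p := by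
          rw [← rpow_add (by positivity), add_neg_cancel, rpow_zero, one_mul]
      _ ≤ (2 * ρ) ^ p * (1 + psi' m ‖z‖) ^ (-p) * ‖f z‖ ^ p := by gcongr
      _ = (2 * ρ) ^ p * F z := by ring
      _ ≤ (2 * ρ) ^ p * ‖F z‖ := by gcongr; exact le_norm_self _
  have hdisc : π * (ρ / 2) ^ 2 * ‖f a‖ ^ p ≤ (2 * ρ) ^ p * K :=
    calc π * (ρ / 2) ^ 2 * ‖f a‖ ^ p ≤ ∫ z in ball a (ρ / 2), ‖f z‖ ^ p :=
          hf.pi_mul_sq_mul_norm_rpow_le_setIntegral hp a (by positivity)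
      _ ≤ ∫ z in ball a (ρ / 2), (2 * ρ) ^ p * ‖F z‖ :=
          setIntegral_mono_on ((hf.continuous.norm.rpow_const fun _ ↦ Or.inr hp.le).continuousOn
            |>.integrableOn_compact (isCompact_closedBall a (ρ / 2)) |>.mono_set
              ball_subset_closedBall)
            (hint.norm.integrableOn.const_mul _) measurableSet_ball hlocal
      _ = (2 * ρ) ^ p * ∫ z in ball a (ρ / 2), ‖F z‖ := integral_const_mul _ _
      _ ≤ (2 * ρ) ^ p * K := by
          gcongr
          exact setIntegral_le_integral hint.norm (.of_forall fun _ ↦ norm_nonneg _)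
  have hpow : ‖f a‖ ^ p ≤ C * ρ ^ (p - 2) := by
    rw [rpow_sub hρ, rpow_two, mul_div, le_div_iff₀ (by positivity)]
    rw [mul_rpow zero_le_two hρ.le] at hdisc
    simp only [C]
    field_simp
    nlinarith [pi_pos]
  calc ‖f a‖ = (‖f a‖ ^ p) ^ p⁻¹ := (rpow_rpow_inv (norm_nonneg _) hp.ne').symm
    _ ≤ (C * ρ ^ (p - 2)) ^ p⁻¹ := by gcongr
    _ = C ^ p⁻¹ * ρ ^ ((p - 2) / p) := by
        rw [mul_rpow hC (by positivity), ← rpow_mul hρ.le, div_eq_mul_inv]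

/-- If g is entire and ∫_ℂ |g'(z)|^p (1+ψ_m'(|z|))^{−p} dA(z) < ∞, then g' is constant
when p > 2, and g' ≡ 0 when 0 < p ≤ 2. -/
theorem stmt_11 (m : ℕ) (p : ℝ) (hp : 0 < p) (g : ℂ → ℂ) (hg : Differentiable ℂ g)
    (hint : Integrable
      (fun z : ℂ => ‖deriv g z‖ ^ p * (1 + psi' m (‖z‖)) ^ (-p))
      volume) :
    (2 < p → ∃ c : ℂ, ∀ z : ℂ, deriv g z = c) ∧
    (p ≤ 2 → ∀ z : ℂ, deriv g z = 0) := by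
  have hf : Differentiable ℂ (deriv g) := hg.deriv
  obtain ⟨B, hB⟩ := hf.exists_norm_le_rpow_of_integrable m hp hint
  have hconst : ∀ z, deriv g z = deriv g 0 :=
    fun z ↦ hf.apply_eq_apply_of_norm_le_rpow ((div_lt_one hp).2 (by linarith)) hB z 0
  refine ⟨fun _ ↦ ⟨deriv g 0, hconst⟩, fun hp2 z ↦ ?_⟩
  rw [hconst z]
  by_contra h0
  refine not_integrable_one_add_psi'_rpow_neg m hp.le hp2 ?_
  have hc : 0 < ‖deriv g 0‖ ^ p := rpow_pos_of_pos (norm_pos_iff.2 h0) p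
  simpa only [hconst, ← mul_assoc, inv_mul_cancel₀ hc.ne', one_mul] using
    hint.const_mul (‖deriv g 0‖ ^ p)⁻¹
end
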